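/- arXiv:0712.1446 — 2 statements merged into one kernel-verified Lean document; each statement's English description precedes it below -/
import Mathlib

section
/- (Minsky–Papert) Any real multilinear polynomial p on {0,1}^n that sign-represents PARITY (i.e., p(x) > 0 if ⊕_i x_i = 1 and p(x) < 0 if ⊕_i x_i = 0) has degree at least n. -/
open MvPolynomial

/-- Key cancellation: if a monomial `m` misses variable `i0` (i.e. `m i0 = 0`), then the
signed sum over the Boolean cube of its evaluations vanishes, by the involution flipping
coordinate `i0`. -/
lemma signed_sum_monomial_zero {n : ℕ} (m : Fin n →₀ ℕ) (c : ℝ) (i0 : Fin n)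
    (hi0 : m i0 = 0) :
    ∑ x : Fin n → Bool,
      (-1 : ℝ) ^ ((Finset.univ.filter (fun i => x i = true)).card) *
        (c * ∏ i, (if x i then (1:ℝ) else 0) ^ (m i)) = 0 := by
  classical
  -- rewrite the sign as a product
  have hwprod : ∀ x : Fin n → Bool,
      (-1 : ℝ) ^ ((Finset.univ.filter (fun i => x i = true)).card)
        = ∏ i, (if x i then (-1:ℝ) else 1) := by
    intro x
    rw [Finset.prod_ite, Finset.prod_const, Finset.prod_const, one_pow, mul_one]
  set F : (Fin n → Bool) → ℝ :=
    fun x => ∏ i, ((if x i then (-1:ℝ) else 1) * (if x i then (1:ℝ) else 0) ^ (m i)) with hF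
  have hFform : ∀ x : Fin n → Bool,
      (-1 : ℝ) ^ ((Finset.univ.filter (fun i => x i = true)).card) *
        (c * ∏ i, (if x i then (1:ℝ) else 0) ^ (m i)) = c * F x := by
    intro x
    rw [hwprod, hF]
    simp only
    rw [Finset.prod_mul_distrib]
    ring
  have h1 : ∀ y : Fin n → Bool,
      F y = (if y i0 then (-1:ℝ) else 1) *
        ∏ i ∈ Finset.univ.erase i0,
          ((if y i then (-1:ℝ) else 1) * (if y i then (1:ℝ) else 0) ^ (m i)) := by
    intro y
    rw [hF]
    simp only
    rw [← Finset.mul_prod_erase Finset.univ _ (Finset.mem_univ i0), hi0, pow_zero, mul_one]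
  have key : ∀ (x : Fin n → Bool), F (Function.update x i0 (!x i0)) = - F x := by
    intro x
    rw [h1, h1]
    have h2 : ∏ i ∈ Finset.univ.erase i0,
        ((if Function.update x i0 (!x i0) i then (-1:ℝ) else 1) *
          (if Function.update x i0 (!x i0) i then (1:ℝ) else 0) ^ (m i))
        = ∏ i ∈ Finset.univ.erase i0,
        ((if x i then (-1:ℝ) else 1) * (if x i then (1:ℝ) else 0) ^ (m i)) := by
      apply Finset.prod_congr rfl
      intro i hi
      rw [Function.update_of_ne (Finset.ne_of_mem_erase hi)]
    rw [h2, Function.update_self]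
    cases hx : x i0 <;> simp
  calc ∑ x : Fin n → Bool,
      (-1 : ℝ) ^ ((Finset.univ.filter (fun i => x i = true)).card) *
        (c * ∏ i, (if x i then (1:ℝ) else 0) ^ (m i))
      = ∑ x : Fin n → Bool, c * F x := by
        exact Finset.sum_congr rfl (fun x _ => hFform x)
    _ = c * ∑ x : Fin n → Bool, F x := by rw [Finset.mul_sum]
    _ = 0 := by
        have hz : ∑ x : Fin n → Bool, F x = 0 := by
          apply Finset.sum_ninvolution (g := fun x => Function.update x i0 (!x i0))
          · intro x; rw [key]; ring
          · intro x _ h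
            have h2 := congrFun h i0
            rw [Function.update_self] at h2
            exact Bool.not_ne_self (x i0) h2
          · intro x; exact Finset.mem_univ _
          · intro x
            funext i
            by_cases hii : i = i0
            · subst hii; simp
            · rw [Function.update_of_ne hii, Function.update_of_ne hii]
        rw [hz, mul_zero]

/-- (Minsky–Papert) Any real polynomial on `{0,1}^n` sign-representing PARITY has
degree at least `n`. -/
theorem stmt5 (n : ℕ) (p : MvPolynomial (Fin n) ℝ)
    (hsign : ∀ x : Fin n → Bool,
      ((Finset.univ.filter (fun i => x i = true)).card % 2 = 1 →
        0 < eval (fun i => if x i then (1:ℝ) else 0) p) ∧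
      ((Finset.univ.filter (fun i => x i = true)).card % 2 = 0 →
        eval (fun i => if x i then (1:ℝ) else 0) p < 0)) :
    n ≤ p.totalDegree := by
  classical
  by_contra hlt
  push_neg at hlt
  set w : (Fin n → Bool) → ℝ :=
    fun x => (-1 : ℝ) ^ ((Finset.univ.filter (fun i => x i = true)).card) with hw
  -- every term in the signed sum is negative
  have hneg : ∀ x : Fin n → Bool,
      w x * eval (fun i => if x i then (1:ℝ) else 0) p < 0 := by
    intro x
    rcases Nat.mod_two_eq_zero_or_one ((Finset.univ.filter (fun i => x i = true)).card)
      with h | h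
    · have hp := (hsign x).2 h
      have hw1 : w x = 1 := Even.neg_one_pow (Nat.even_iff.mpr h)
      rw [hw1]; linarith
    · have hp := (hsign x).1 h
      have hw1 : w x = -1 := Odd.neg_one_pow (Nat.odd_iff.mpr h)
      rw [hw1]; linarith
  -- but the signed sum is zero since every monomial misses a variable
  have hsum0 : ∑ x : Fin n → Bool, w x * eval (fun i => if x i then (1:ℝ) else 0) p = 0 := by
    have heval : ∀ x : Fin n → Bool,
        eval (fun i => if x i then (1:ℝ) else 0) p
          = ∑ m ∈ p.support, coeff m p * ∏ i, (if x i then (1:ℝ) else 0) ^ (m i) := by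
      intro x
      rw [eval_eq']
    calc ∑ x : Fin n → Bool, w x * eval (fun i => if x i then (1:ℝ) else 0) p
        = ∑ x : Fin n → Bool, ∑ m ∈ p.support,
            w x * (coeff m p * ∏ i, (if x i then (1:ℝ) else 0) ^ (m i)) := by
          refine Finset.sum_congr rfl (fun x _ => ?_)
          rw [heval, Finset.mul_sum]
      _ = ∑ m ∈ p.support, ∑ x : Fin n → Bool,
            w x * (coeff m p * ∏ i, (if x i then (1:ℝ) else 0) ^ (m i)) :=
          Finset.sum_comm
      _ = 0 := by
          refine Finset.sum_eq_zero (fun m hm => ?_)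
          -- there is a variable missing from m
          have hdeg : (m.sum fun _ e => e) ≤ p.totalDegree := le_totalDegree hm
          have hexists : ∃ i0 : Fin n, m i0 = 0 := by
            by_contra hall
            push_neg at hall
            have h1 : ∀ i : Fin n, 1 ≤ m i := fun i => Nat.one_le_iff_ne_zero.mpr (hall i)
            have hsum : (m.sum fun _ e => e) = ∑ i : Fin n, m i :=
              Finsupp.sum_fintype _ _ (fun _ => rfl)
            have : (n : ℕ) ≤ ∑ i : Fin n, m i := by
              calc (n : ℕ) = ∑ _i : Fin n, 1 := by simp
                _ ≤ ∑ i : Fin n, m i := Finset.sum_le_sum (fun i _ => h1 i)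
            omega
          obtain ⟨i0, hi0⟩ := hexists
          exact signed_sum_monomial_zero m (coeff m p) i0 hi0
  have hsneg : ∑ x : Fin n → Bool, w x * eval (fun i => if x i then (1:ℝ) else 0) p < 0 := by
    apply Finset.sum_neg (fun x _ => hneg x)
    exact Finset.univ_nonempty
  linarith
end

section
/- (Symmetrization) For any real multilinear polynomial p on {0,1}^n of degree d, the function q : {0,...,n} → ℝ defined by q(k) = (Σ_{y : |y|=k} p(y)) / C(n,k) agrees with a univariate real polynomial of degree at most d. -/
/-!
Evaluated at the indicator vector of a set `T`, a monomial with support `S` equals `[S ⊆ T]`.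
By linearity it therefore suffices to count the `k`-subsets of an `n`-set containing a fixed
`m`-set: there are `C(n - m, k - m)` of them, and
`C(n - m, k - m) / C(n, k) = k (k - 1) ⋯ (k - m + 1) / (n (n - 1) ⋯ (n - m + 1))`
is a polynomial of degree `m ≤ deg p` in `k`.
-/

open MvPolynomial Finset

theorem Nat.choose_sub_mul_descFactorial {n k m : ℕ} (hmk : m ≤ k) :
    (n - m).choose (k - m) * n.descFactorial m = n.choose k * k.descFactorial m := by
  simp only [Nat.descFactorial_eq_factorial_mul_choose]
  rw [mul_left_comm (n.choose k), Nat.choose_mul hmk]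
  ring

theorem Finsupp.card_support_le_sum {σ : Type*} (s : σ →₀ ℕ) :
    #s.support ≤ s.sum fun _ e => e := by
  rw [Finsupp.sum]
  simpa using s.support.card_nsmul_le_sum s 1 fun i hi =>
    Nat.one_le_iff_ne_zero.mpr (Finsupp.mem_support_iff.mp hi)

section BooleanCube

variable {ι : Type*} [Fintype ι] [DecidableEq ι]

theorem sum_filter_card_true_eq_sum_powersetCard {M : Type*} [AddCommMonoid M] (k : ℕ)
    (f : Finset ι → M) :
    ∑ y ∈ univ.filter (fun y : ι → Bool => #{i | y i = true} = k),
        f ({i | y i = true} : Finset ι) =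
      ∑ T ∈ powersetCard k univ, f T := by
  refine sum_nbij' (fun y => ({i | y i = true} : Finset ι)) (fun T i => decide (i ∈ T))
    ?_ ?_ ?_ ?_ ?_ <;> intros <;> simp_all

-- Multiplied out, the count identity also covers `k < #S`, where both sides vanish.
theorem card_filter_powersetCard_superset_mul_descFactorial (S : Finset ι) (k : ℕ) :
    #{T ∈ powersetCard k (univ : Finset ι) | S ⊆ T} * (Fintype.card ι).descFactorial #S =
      (Fintype.card ι).choose k * k.descFactorial #S := by
  rcases le_or_gt #S k with hSk | hkS
  · rw [card_filter_powersetCard_subset S univ k (subset_univ S) hSk, card_univ,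
      Nat.choose_sub_mul_descFactorial hSk]
  · have hempty : {T ∈ powersetCard k (univ : Finset ι) | S ⊆ T} = ∅ :=
      filter_false_of_mem fun T hT hST =>
        hkS.not_ge ((card_le_card hST).trans_eq (mem_powersetCard.mp hT).2)
    rw [hempty, Nat.descFactorial_eq_zero_iff_lt.mpr hkS]
    simp

end BooleanCube

namespace MvPolynomial

variable {σ : Type*} [Fintype σ]

theorem eval_boolIndicator [DecidableEq σ] {R : Type*} [CommSemiring R] (p : MvPolynomial σ R)
    (y : σ → Bool) :
    eval (fun i => if y i then (1 : R) else 0) p =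
      ∑ s ∈ p.support,
        if s.support ⊆ ({i | y i = true} : Finset σ) then p.coeff s else 0 := by
  rw [eval_eq]
  refine sum_congr rfl fun s _ => ?_
  have hpow : ∀ i ∈ s.support, (if y i then (1 : R) else 0) ^ s i = if y i then 1 else 0 :=
    fun i hi => by split_ifs <;> simp [Finsupp.mem_support_iff.mp hi]
  rw [prod_congr rfl hpow, prod_boole]
  simp only [mul_ite, mul_one, mul_zero, subset_iff, mem_filter, mem_univ, true_and]

theorem sum_eval_boolIndicator_slice [DecidableEq σ] {R : Type*} [CommSemiring R]
    (p : MvPolynomial σ R) (k : ℕ) :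
    ∑ y ∈ univ.filter (fun y : σ → Bool => #{i | y i = true} = k),
        eval (fun i => if y i then (1 : R) else 0) p =
      ∑ s ∈ p.support, #{T ∈ powersetCard k univ | s.support ⊆ T} • p.coeff s := by
  simp only [eval_boolIndicator]
  rw [sum_comm]
  refine sum_congr rfl fun s _ => ?_
  rw [sum_filter_card_true_eq_sum_powersetCard k fun T => if s.support ⊆ T then p.coeff s else 0,
    sum_ite, sum_const_zero, add_zero, sum_const]

variable {K : Type*} [Field K]

noncomputable def symmetrization (p : MvPolynomial σ K) : Polynomial K :=
  ∑ s ∈ p.support, Polynomial.C (p.coeff s / (Fintype.card σ).descFactorial #s.support) *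
    descPochhammer K #s.support

theorem natDegree_symmetrization_le (p : MvPolynomial σ K) :
    (symmetrization p).natDegree ≤ p.totalDegree := by
  refine Polynomial.natDegree_sum_le_of_forall_le _ _ fun s hs => ?_
  refine (Polynomial.natDegree_C_mul_le _ _).trans ?_
  rw [descPochhammer_natDegree]
  exact s.card_support_le_sum.trans (le_totalDegree hs)

theorem eval_symmetrization_mul_choose [DecidableEq σ] [CharZero K] (p : MvPolynomial σ K)
    (k : ℕ) :
    (symmetrization p).eval (k : K) * (Fintype.card σ).choose k =
      ∑ y ∈ univ.filter (fun y : σ → Bool => #{i | y i = true} = k),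
        eval (fun i => if y i then (1 : K) else 0) p := by
  rw [sum_eval_boolIndicator_slice, symmetrization, Polynomial.eval_finsetSum, sum_mul]
  refine sum_congr rfl fun s _ => ?_
  have hdesc : ((Fintype.card σ).descFactorial #s.support : K) ≠ 0 := by
    exact_mod_cast (Nat.descFactorial_eq_zero_iff_lt.not.mpr
      (card_le_univ s.support).not_gt)
  have hcount := congrArg (Nat.cast : ℕ → K)
    (card_filter_powersetCard_superset_mul_descFactorial s.support k)
  push_cast at hcount
  rw [Polynomial.eval_mul, Polynomial.eval_C, descPochhammer_eval_eq_descFactorial, nsmul_eq_mul]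
  calc p.coeff s / (Fintype.card σ).descFactorial #s.support * k.descFactorial #s.support *
        (Fintype.card σ).choose k
      = p.coeff s * ((Fintype.card σ).choose k * k.descFactorial #s.support) /
          (Fintype.card σ).descFactorial #s.support := by ring
    _ = #{T ∈ powersetCard k univ | s.support ⊆ T} * p.coeff s := by
      rw [← hcount]; field_simp

end MvPolynomial

/-- (Symmetrization) For a real polynomial `p` on `{0,1}^n` of degree at most `d`,
the function `k ↦ (Σ_{|y|=k} p(y)) / C(n,k)` agrees on `{0,…,n}` with a univariate
real polynomial of degree at most `d`. -/
theorem stmt6 (n d : ℕ) (p : MvPolynomial (Fin n) ℝ) (hdeg : p.totalDegree ≤ d) :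
    ∃ Q : Polynomial ℝ, Q.natDegree ≤ d ∧ ∀ k : ℕ, k ≤ n →
      Q.eval (k : ℝ) =
        (∑ y ∈ Finset.univ.filter
            (fun y : Fin n → Bool => (Finset.univ.filter (fun i => y i = true)).card = k),
          eval (fun i => if y i then (1:ℝ) else 0) p) / (Nat.choose n k : ℝ) := by
  refine ⟨p.symmetrization, p.natDegree_symmetrization_le.trans hdeg, fun k hk => ?_⟩
  have hchoose : (n.choose k : ℝ) ≠ 0 := by exact_mod_cast (Nat.choose_pos hk).ne'
  rw [eq_div_iff hchoose, ← eval_symmetrization_mul_choose, Fintype.card_fin]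
end
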